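/- arXiv:1805.07909 — 2 statements merged into one kernel-verified Lean document; each statement's English description precedes it below -/
import Mathlib

section
/- Let d ≥ 1, let 𝒳 ⊆ ℝ^d be compact, let f : ℝ^d → ℝ be continuous, and let 0 < β < 1. Suppose M₁ and M₂ are cluster-cores of f, i.e., for i = 1, 2, M_i is a nonempty subset of 𝒳 that equals the connected component containing one of its points of the set {x ∈ 𝒳 : f(x) ≥ (1 − β)·sup_{x' ∈ M_i} f(x')}. If M₁ ≠ M₂, then M₁ ∩ M₂ = ∅. -/
/-!
If two cluster-cores share a point `z`, both are the connected component of `z` in their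
superlevel sets. The core with the smaller supremum has the larger superlevel set, so it
contains the other core; hence the two suprema agree, the superlevel sets coincide, and so
do the cores.
-/

open Set

section ClusterCore

variable {X : Type*} [TopologicalSpace X] {𝒳 : Set X} {f : X → ℝ} {β : ℝ} {M M₁ M₂ : Set X}
  {z : X}

def IsClusterCore (𝒳 : Set X) (f : X → ℝ) (β : ℝ) (M : Set X) : Prop :=
  ∃ x ∈ M, M = connectedComponentIn {y ∈ 𝒳 | (1 - β) * sSup (f '' M) ≤ f y} x

theorem IsClusterCore.eq_connectedComponentIn (hM : IsClusterCore 𝒳 f β M) (hz : z ∈ M) :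
    M = connectedComponentIn {y ∈ 𝒳 | (1 - β) * sSup (f '' M) ≤ f y} z := by
  obtain ⟨x, -, hx⟩ := hM
  conv_lhs => rw [hx]
  exact connectedComponentIn_eq (hx ▸ hz)

theorem IsClusterCore.subset_of_sSup_le (h₁ : IsClusterCore 𝒳 f β M₁)
    (h₂ : IsClusterCore 𝒳 f β M₂) (hβ : β ≤ 1) (hsup : sSup (f '' M₂) ≤ sSup (f '' M₁))
    (hz₁ : z ∈ M₁) (hz₂ : z ∈ M₂) : M₁ ⊆ M₂ := by
  have hlevel : {y ∈ 𝒳 | (1 - β) * sSup (f '' M₁) ≤ f y} ⊆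
      {y ∈ 𝒳 | (1 - β) * sSup (f '' M₂) ≤ f y} := fun y ⟨hy𝒳, hy⟩ =>
    ⟨hy𝒳, (mul_le_mul_of_nonneg_left hsup (sub_nonneg.mpr hβ)).trans hy⟩
  rw [h₁.eq_connectedComponentIn hz₁, h₂.eq_connectedComponentIn hz₂]
  exact connectedComponentIn_mono z hlevel

theorem IsClusterCore.eq_of_sSup_le (h₁ : IsClusterCore 𝒳 f β M₁)
    (h₂ : IsClusterCore 𝒳 f β M₂) (hβ : β ≤ 1) (hbdd : BddAbove (f '' M₂))
    (hsup : sSup (f '' M₂) ≤ sSup (f '' M₁)) (hz₁ : z ∈ M₁) (hz₂ : z ∈ M₂) : M₁ = M₂ := by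
  have hsub : M₁ ⊆ M₂ := h₁.subset_of_sSup_le h₂ hβ hsup hz₁ hz₂
  have hsup_eq : sSup (f '' M₁) = sSup (f '' M₂) :=
    le_antisymm (csSup_le_csSup hbdd ⟨f z, z, hz₁, rfl⟩ (image_mono hsub)) hsup
  rw [h₁.eq_connectedComponentIn hz₁, h₂.eq_connectedComponentIn hz₂, hsup_eq]

theorem IsClusterCore.eq_of_mem_of_mem (h₁ : IsClusterCore 𝒳 f β M₁)
    (h₂ : IsClusterCore 𝒳 f β M₂) (hβ : β ≤ 1) (hbdd₁ : BddAbove (f '' M₁))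
    (hbdd₂ : BddAbove (f '' M₂)) (hz₁ : z ∈ M₁) (hz₂ : z ∈ M₂) : M₁ = M₂ := by
  rcases le_total (sSup (f '' M₂)) (sSup (f '' M₁)) with hsup | hsup
  · exact h₁.eq_of_sSup_le h₂ hβ hbdd₂ hsup hz₁ hz₂
  · exact (h₂.eq_of_sSup_le h₁ hβ hbdd₁ hsup hz₂ hz₁).symm

end ClusterCore

theorem clusterCores_disjoint_general {d : ℕ}
    (𝒳 : Set (EuclideanSpace ℝ (Fin d))) (hcomp : IsCompact 𝒳)
    (f : EuclideanSpace ℝ (Fin d) → ℝ) (hf : Continuous f)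
    (β : ℝ) (hβ1 : β < 1)
    (M₁ M₂ : Set (EuclideanSpace ℝ (Fin d)))
    (hM₁X : M₁ ⊆ 𝒳) (hM₂X : M₂ ⊆ 𝒳)
    (hcc₁ : ∃ x ∈ M₁,
      M₁ = connectedComponentIn {y ∈ 𝒳 | (1 - β) * sSup (f '' M₁) ≤ f y} x)
    (hcc₂ : ∃ x ∈ M₂,
      M₂ = connectedComponentIn {y ∈ 𝒳 | (1 - β) * sSup (f '' M₂) ≤ f y} x)
    (hne : M₁ ≠ M₂) :
    M₁ ∩ M₂ = ∅ := by
  have hbdd : BddAbove (f '' 𝒳) := (hcomp.image hf).bddAbove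
  refine eq_empty_of_forall_notMem fun z ⟨hz₁, hz₂⟩ => hne ?_
  exact IsClusterCore.eq_of_mem_of_mem hcc₁ hcc₂ hβ1.le (hbdd.mono (image_mono hM₁X))
    (hbdd.mono (image_mono hM₂X)) hz₁ hz₂

/-- Distinct cluster-cores of a continuous density `f` on a compact support `𝒳`
are disjoint.  A cluster-core with fluctuation parameter `β ∈ (0,1)` is a nonempty
subset of `𝒳` that equals the connected component, containing one of its points,
of the superlevel set `{x ∈ 𝒳 | f x ≥ (1 - β) * sup_{x' ∈ M} f x'}`. -/
theorem clusterCores_disjoint {d : ℕ} (hd : 1 ≤ d)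
    (𝒳 : Set (EuclideanSpace ℝ (Fin d))) (hcomp : IsCompact 𝒳)
    (f : EuclideanSpace ℝ (Fin d) → ℝ) (hf : Continuous f)
    (β : ℝ) (hβ0 : 0 < β) (hβ1 : β < 1)
    (M₁ M₂ : Set (EuclideanSpace ℝ (Fin d)))
    (hM₁ne : M₁.Nonempty) (hM₂ne : M₂.Nonempty)
    (hM₁X : M₁ ⊆ 𝒳) (hM₂X : M₂ ⊆ 𝒳)
    (hcc₁ : ∃ x ∈ M₁,
      M₁ = connectedComponentIn {y ∈ 𝒳 | (1 - β) * sSup (f '' M₁) ≤ f y} x)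
    (hcc₂ : ∃ x ∈ M₂,
      M₂ = connectedComponentIn {y ∈ 𝒳 | (1 - β) * sSup (f '' M₂) ≤ f y} x)
    (hne : M₁ ≠ M₂) :
    M₁ ∩ M₂ = ∅ :=
  clusterCores_disjoint_general 𝒳 hcomp f hf β hβ1 M₁ M₂ hM₁X hM₂X hcc₁ hcc₂ hne
end

section
/- Let f : ℝ^d → ℝ be continuous and differentiable, let π : ℝ → ℝ^d be a gradient ascent path of f (i.e., π'(t) = ∇f(π(t)) for all t), let λ ∈ ℝ and t₀ ∈ ℝ, and suppose π(t₀) lies in M, where M is the connected component of the closed superlevel set {x ∈ ℝ^d : f(x) ≥ λ} containing π(t₀). Then π(t) ∈ M for all t ≥ t₀; that is, once a gradient ascent path enters a connected component of a superlevel set, it never leaves it. -/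
/-! Along a gradient ascent path `f` is nondecreasing, its derivative being `‖∇f‖²`; hence the image
of `[t₀, t]` is a connected subset of the superlevel set through `π t₀`. -/

open Gradient Set

open scoped RealInnerProductSpace

theorem HasGradientAt.comp_hasDerivAt {F : Type*} [NormedAddCommGroup F] [InnerProductSpace ℝ F]
    [CompleteSpace F] {f : F → ℝ} {γ : ℝ → F} {g γ' : F} {t : ℝ}
    (hf : HasGradientAt f g (γ t)) (hγ : HasDerivAt γ γ' t) :
    HasDerivAt (f ∘ γ) ⟪g, γ'⟫ t := by
  simpa using hf.hasFDerivAt.comp_hasDerivAt t hγ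

theorem monotone_comp_of_hasDerivAt_gradient {F : Type*} [NormedAddCommGroup F]
    [InnerProductSpace ℝ F] [CompleteSpace F] {f : F → ℝ} {π : ℝ → F}
    (hf : Differentiable ℝ f) (hπ : ∀ t, HasDerivAt π (∇ f (π t)) t) :
    Monotone (f ∘ π) := by
  have hderiv (t : ℝ) : HasDerivAt (f ∘ π) ⟪∇ f (π t), ∇ f (π t)⟫ t :=
    (hf (π t)).hasGradientAt.comp_hasDerivAt (hπ t)
  refine monotone_of_deriv_nonneg (fun t => (hderiv t).differentiableAt) fun t => ?_
  rw [(hderiv t).deriv]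
  exact real_inner_self_nonneg

theorem mem_connectedComponentIn_of_mapsTo_Icc {α X : Type*}
    [ConditionallyCompleteLinearOrder α] [TopologicalSpace α] [OrderTopology α] [DenselyOrdered α]
    [TopologicalSpace X] {γ : α → X} {S : Set X} {a b : α} (hab : a ≤ b)
    (hγ : ContinuousOn γ (Icc a b)) (hS : MapsTo γ (Icc a b) S) :
    γ b ∈ connectedComponentIn S (γ a) :=
  (isPreconnected_Icc.image γ hγ).subset_connectedComponentIn
    (mem_image_of_mem γ (left_mem_Icc.2 hab)) hS.image_subset
    (mem_image_of_mem γ (right_mem_Icc.2 hab))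

theorem gradientFlow_stays_in_connectedComponent_of_superlevel_general
    {d : ℕ}
    (f : EuclideanSpace ℝ (Fin d) → ℝ)
    (hfd : Differentiable ℝ f)
    (π : ℝ → EuclideanSpace ℝ (Fin d))
    (hπ : ∀ t : ℝ, HasDerivAt π (gradient f (π t)) t)
    (lam : ℝ) (t₀ : ℝ)
    (hmem : π t₀ ∈ connectedComponentIn {x | lam ≤ f x} (π t₀)) :
    ∀ t : ℝ, t₀ ≤ t → π t ∈ connectedComponentIn {x | lam ≤ f x} (π t₀) := by
  intro t ht
  have hmono := monotone_comp_of_hasDerivAt_gradient hfd hπ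
  have hπc : Continuous π := continuous_iff_continuousAt.2 fun s => (hπ s).continuousAt
  have ht₀ : lam ≤ f (π t₀) := connectedComponentIn_subset {x | lam ≤ f x} (π t₀) hmem
  exact mem_connectedComponentIn_of_mapsTo_Icc ht hπc.continuousOn
    fun s hs => ht₀.trans (hmono hs.1)

/-- Once a gradient ascent path of a continuous differentiable function
`f : ℝ^d → ℝ` enters a connected component of the superlevel set
`{x | f x ≥ λ}`, it never leaves it. -/
theorem gradientFlow_stays_in_connectedComponent_of_superlevel
    {d : ℕ} (hd : 1 ≤ d)
    (f : EuclideanSpace ℝ (Fin d) → ℝ)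
    (hfc : Continuous f) (hfd : Differentiable ℝ f)
    (π : ℝ → EuclideanSpace ℝ (Fin d))
    (hπ : ∀ t : ℝ, HasDerivAt π (gradient f (π t)) t)
    (lam : ℝ) (t₀ : ℝ)
    (hmem : π t₀ ∈ connectedComponentIn {x | lam ≤ f x} (π t₀)) :
    ∀ t : ℝ, t₀ ≤ t → π t ∈ connectedComponentIn {x | lam ≤ f x} (π t₀) :=
  gradientFlow_stays_in_connectedComponent_of_superlevel_general f hfd π hπ lam t₀ hmem
end
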